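/- arXiv:1202.6443 — 2 statements merged into one kernel-verified Lean document; each statement's English description precedes it below -/
import Mathlib

section
/- For real numbers ξ, ξ₁, c with τ = τ₁ + τ₂ and ξ = ξ₁ + (ξ−ξ₁), the maximum of |τ − p(ξ)|, |τ₁ − p(ξ₁)|, |(τ−τ₁) − p(ξ−ξ₁)| is at least (1/3)·|(τ − p(ξ)) − (τ₁ − p(ξ₁)) − ((τ−τ₁) − p(ξ−ξ₁))|, where p(ξ) = ξ⁵ + cξ³, and hence at least (5/6)·|ξ ξ₁ (ξ−ξ₁)| · |ξ² + ξ₁² + (ξ−ξ₁)² + (6/5)c|. -/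
/-- Modulation lower bound from the resonance identity for `p ξ = ξ^5 + c ξ^3`. -/
theorem kawahara_modulation_lower_bound (c τ τ₁ ξ ξ₁ : ℝ) :
    (1/3) * |(τ - (ξ^5 + c * ξ^3)) - (τ₁ - (ξ₁^5 + c * ξ₁^3))
        - ((τ - τ₁) - ((ξ - ξ₁)^5 + c * (ξ - ξ₁)^3))|
      ≤ max (|τ - (ξ^5 + c * ξ^3)|)
          (max (|τ₁ - (ξ₁^5 + c * ξ₁^3)|) (|(τ - τ₁) - ((ξ - ξ₁)^5 + c * (ξ - ξ₁)^3)|))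
    ∧ (5/6) * |ξ * ξ₁ * (ξ - ξ₁)| * |ξ^2 + ξ₁^2 + (ξ - ξ₁)^2 + (6/5) * c|
      ≤ max (|τ - (ξ^5 + c * ξ^3)|)
          (max (|τ₁ - (ξ₁^5 + c * ξ₁^3)|) (|(τ - τ₁) - ((ξ - ξ₁)^5 + c * (ξ - ξ₁)^3)|)) := by
  set a := τ - (ξ^5 + c * ξ^3) with ha
  set b := τ₁ - (ξ₁^5 + c * ξ₁^3) with hb
  set d := (τ - τ₁) - ((ξ - ξ₁)^5 + c * (ξ - ξ₁)^3) with hd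
  have h1 : (1/3) * |a - b - d| ≤ max |a| (max |b| |d|) := by
    have habs : |a - b - d| ≤ |a| + |b| + |d| := by
      calc |a - b - d| ≤ |a - b| + |d| := abs_sub _ _
        _ ≤ |a| + |b| + |d| := by linarith [abs_sub a b]
    have h2 : |a| ≤ max |a| (max |b| |d|) := le_max_left _ _
    have h3 : |b| ≤ max |a| (max |b| |d|) := le_trans (le_max_left _ _) (le_max_right _ _)
    have h4 : |d| ≤ max |a| (max |b| |d|) := le_trans (le_max_right _ _) (le_max_right _ _)
    linarith
  refine ⟨h1, ?_⟩
  have key : (5/6) * |ξ * ξ₁ * (ξ - ξ₁)| * |ξ^2 + ξ₁^2 + (ξ - ξ₁)^2 + (6/5) * c|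
      = (1/3) * |a - b - d| := by
    rw [ha, hb, hd]
    have : (τ - (ξ^5 + c * ξ^3)) - (τ₁ - (ξ₁^5 + c * ξ₁^3))
        - ((τ - τ₁) - ((ξ - ξ₁)^5 + c * (ξ - ξ₁)^3))
        = -(5/2 * ((ξ * ξ₁ * (ξ - ξ₁)) * (ξ^2 + ξ₁^2 + (ξ - ξ₁)^2 + (6/5) * c))) := by
      ring
    rw [this, abs_neg]
    simp only [abs_mul, show |(5:ℝ)/2| = 5/2 from by norm_num]
    ring
  linarith [key ▸ h1, key]
end

section
/- Let m : ℝ → (0,1] be even, equal to 1 on [−N,N], nonincreasing on [0,∞), and satisfying the Lipschitz-type bound |m(ξ)−m(η)| ≤ C|ξ−η| sup_{θ between ξ,η} |m'(θ)| with |m'(θ)| ≤ C m(θ)/⟨θ⟩. If ξ₁+ξ₂+ξ₃ = 0 and |ξ₁| ≥ |ξ₂| ≥ |ξ₃|, then |m(ξ₁)m(ξ₂+ξ₃)(ξ₂+ξ₃) + m(ξ₂)m(ξ₁+ξ₃)(ξ₁+ξ₃) + m(ξ₃)m(ξ₁+ξ₂)(ξ₁+ξ₂)| ≤ C' |ξ₃|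 m(ξ₃)², i.e., the M₃ symbol is bounded by |ξ₃|m²(ξ₃). -/
/-!
Evenness of `m` and `ξ₁ = -ξ₂ - ξ₃` turn the symbol into
`-((m(ξ₂)² - m(ξ₁)²) ξ₂ + (m(ξ₃)² - m(ξ₁)²) ξ₃)`. Since `m` decreases in `|ξ|`, the second term is
at most `|ξ₃| m(ξ₃)²`. In the first, the mean value bound
`|m(ξ₁) - m(ξ₂)| ≲ (|ξ₁| - |ξ₂|) m(ξ₂) / ⟨ξ₂⟩ ≤ |ξ₃| m(ξ₂) / ⟨ξ₂⟩` absorbs the factor `ξ₂`.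
-/

open Set Real

namespace Function.Even

variable {α β : Type*} {f : α → β}

lemma apply_abs [AddGroup α] [LinearOrder α] (hf : f.Even) (x : α) : f |x| = f x := by
  rcases abs_choice x with h | h <;> simp [h, hf.eq]

lemma le_of_abs_le [AddCommGroup α] [LinearOrder α] [IsOrderedAddMonoid α] [Preorder β]
    (hf : f.Even) (hanti : AntitoneOn f (Ici 0)) {x y : α} (h : |x| ≤ |y|) : f y ≤ f x := by
  rw [← hf.apply_abs x, ← hf.apply_abs y]
  exact hanti (abs_nonneg x) ((abs_nonneg x).trans h) h

end Function.Even

lemma abs_sq_sub_sq_mul_le {x y : ℝ} (hx : 0 ≤ x) (hxy : x ≤ y) (t : ℝ) :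
    |(y ^ 2 - x ^ 2) * t| ≤ y ^ 2 * |t| := by
  rw [abs_mul, abs_of_nonneg (by nlinarith)]
  exact mul_le_mul_of_nonneg_right (by nlinarith) (abs_nonneg t)

namespace IMethod

variable {m : ℝ → ℝ} {C : ℝ}

lemma symbol_eq_of_even (heven : m.Even) {ξ₁ ξ₂ ξ₃ : ℝ} (h : ξ₁ + ξ₂ + ξ₃ = 0) :
    m ξ₁ * m (ξ₂ + ξ₃) * (ξ₂ + ξ₃) + m ξ₂ * m (ξ₁ + ξ₃) * (ξ₁ + ξ₃)
      + m ξ₃ * m (ξ₁ + ξ₂) * (ξ₁ + ξ₂)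
      = -((m ξ₂ ^ 2 - m ξ₁ ^ 2) * ξ₂ + (m ξ₃ ^ 2 - m ξ₁ ^ 2) * ξ₃) := by
  rw [show ξ₂ + ξ₃ = -ξ₁ by linarith, show ξ₁ + ξ₃ = -ξ₂ by linarith,
    show ξ₁ + ξ₂ = -ξ₃ by linarith, heven.eq, heven.eq, heven.eq]
  linear_combination (-m ξ₁ ^ 2) * h

variable (hderiv : ∀ θ, |deriv m θ| ≤ C * m θ / √(1 + θ ^ 2))
include hderiv

lemma mul_apply_nonneg_of_abs_deriv_le (θ : ℝ) : 0 ≤ C * m θ := by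
  have := (abs_nonneg _).trans (hderiv θ)
  rwa [le_div_iff₀ (by positivity), zero_mul] at this

lemma sSup_abs_deriv_uIcc_le (hC : 0 ≤ C) (hanti : AntitoneOn m (Ici 0)) {a b : ℝ}
    (ha : 0 ≤ a) (hab : a ≤ b) :
    sSup ((fun θ => |deriv m θ|) '' uIcc a b) ≤ C * m a / √(1 + a ^ 2) := by
  refine csSup_le (nonempty_uIcc.image _) ?_
  rintro _ ⟨θ, hθ, rfl⟩
  rw [uIcc_of_le hab] at hθ
  calc |deriv m θ| ≤ C * m θ / √(1 + θ ^ 2) := hderiv θ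
    _ ≤ C * m θ / √(1 + a ^ 2) :=
        div_le_div_of_nonneg_left (mul_apply_nonneg_of_abs_deriv_le hderiv θ) (by positivity)
          (sqrt_le_sqrt (by nlinarith [hθ.1]))
    _ ≤ C * m a / √(1 + a ^ 2) := by
        gcongr
        exact hanti ha (ha.trans hθ.1) hθ.1

variable (hLip : ∀ ξ η, |m ξ - m η| ≤ C * |ξ - η| * sSup ((fun θ => |deriv m θ|) '' uIcc ξ η))
include hLip

lemma abs_sub_mul_le (hC : 0 ≤ C) (hanti : AntitoneOn m (Ici 0)) {a b : ℝ} (ha : 0 ≤ a)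
    (hab : a ≤ b) : |m a - m b| * a ≤ C ^ 2 * (b - a) * m a := by
  have hsqrt : a ≤ √(1 + a ^ 2) := (le_abs_self a).trans (abs_le_sqrt (by linarith))
  have hCba : 0 ≤ C * (b - a) := mul_nonneg hC (sub_nonneg.2 hab)
  have hweight : 0 ≤ C * m a / √(1 + a ^ 2) :=
    div_nonneg (mul_apply_nonneg_of_abs_deriv_le hderiv a) (sqrt_nonneg _)
  calc |m a - m b| * a
      ≤ C * (b - a) * sSup ((fun θ => |deriv m θ|) '' uIcc a b) * a := by
        gcongr
        simpa [abs_sub_comm a b, abs_of_nonneg (sub_nonneg.2 hab)] using hLip a b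
    _ ≤ C * (b - a) * (C * m a / √(1 + a ^ 2)) * √(1 + a ^ 2) := by
        refine mul_le_mul ?_ hsqrt ha (mul_nonneg hCba hweight)
        exact mul_le_mul_of_nonneg_left (sSup_abs_deriv_uIcc_le hderiv hC hanti ha hab) hCba
    _ = C ^ 2 * (b - a) * m a := by field_simp

lemma abs_sq_sub_sq_mul_le_of_abs_le (hC : 0 ≤ C) (heven : m.Even)
    (hanti : AntitoneOn m (Ici 0)) {ξ η δ : ℝ} (hm : 0 ≤ m ξ) (h : |η| ≤ |ξ|)
    (hδ : |ξ| - |η| ≤ δ) : |(m η ^ 2 - m ξ ^ 2) * η| ≤ 2 * C ^ 2 * δ * m η ^ 2 := by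
  have hmono : m ξ ≤ m η := heven.le_of_abs_le hanti h
  have hmv : |m ξ - m η| * |η| ≤ C ^ 2 * δ * m η := by
    have := abs_sub_mul_le hderiv hLip hC hanti (abs_nonneg η) h
    rw [heven.apply_abs, heven.apply_abs, abs_sub_comm] at this
    exact this.trans (by gcongr; linarith)
  calc |(m η ^ 2 - m ξ ^ 2) * η| = (m η + m ξ) * (|m ξ - m η| * |η|) := by
        rw [show m η ^ 2 - m ξ ^ 2 = (m η + m ξ) * (m η - m ξ) by ring, abs_mul, abs_mul,
          abs_of_nonneg (by linarith : 0 ≤ m η + m ξ), abs_sub_comm]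
        ring
    _ ≤ (2 * m η) * (C ^ 2 * δ * m η) :=
        mul_le_mul (by linarith) hmv (by positivity) (by linarith)
    _ = 2 * C ^ 2 * δ * m η ^ 2 := by ring

end IMethod

/-- `M₃` symbol bound: for the I-method multiplier `m`, if `ξ₁+ξ₂+ξ₃ = 0` and
`|ξ₁| ≥ |ξ₂| ≥ |ξ₃|`, then `|[m(ξ₁)m(ξ₂+ξ₃)(ξ₂+ξ₃)]_{sym}| ≲ |ξ₃| m(ξ₃)²`. -/
theorem M3_pointwise_bound (C : ℝ) (hC : 0 < C) :
    ∃ C' : ℝ, 0 < C' ∧ ∀ N : ℝ, 0 < N → ∀ m : ℝ → ℝ,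
      (∀ ξ : ℝ, 0 < m ξ ∧ m ξ ≤ 1) →
      (∀ ξ : ℝ, m (-ξ) = m ξ) →
      (∀ ξ : ℝ, |ξ| ≤ N → m ξ = 1) →
      AntitoneOn m (Set.Ici 0) →
      (∀ θ : ℝ, |deriv m θ| ≤ C * m θ / Real.sqrt (1 + θ^2)) →
      (∀ ξ η : ℝ, |m ξ - m η| ≤ C * |ξ - η| * sSup ((fun θ => |deriv m θ|) '' Set.uIcc ξ η)) →
      ∀ ξ₁ ξ₂ ξ₃ : ℝ, ξ₁ + ξ₂ + ξ₃ = 0 → |ξ₂| ≤ |ξ₁| → |ξ₃| ≤ |ξ₂| →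
        |m ξ₁ * m (ξ₂ + ξ₃) * (ξ₂ + ξ₃) + m ξ₂ * m (ξ₁ + ξ₃) * (ξ₁ + ξ₃)
          + m ξ₃ * m (ξ₁ + ξ₂) * (ξ₁ + ξ₂)|
          ≤ C' * |ξ₃| * (m ξ₃)^2 := by
  refine ⟨2 * C ^ 2 + 1, by positivity, ?_⟩
  intro N _ m hpos hsymm _ hanti hderiv hLip ξ₁ ξ₂ ξ₃ hsum h12 h23
  have heven : m.Even := hsymm
  have hm12 : m ξ₁ ≤ m ξ₂ := heven.le_of_abs_le hanti h12
  have hm23 : m ξ₂ ≤ m ξ₃ := heven.le_of_abs_le hanti h23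
  have hgap : |ξ₁| - |ξ₂| ≤ |ξ₃| := by
    have := abs_add_le ξ₂ ξ₃
    rw [show ξ₂ + ξ₃ = -ξ₁ by linarith, abs_neg] at this
    linarith
  have hfirst := IMethod.abs_sq_sub_sq_mul_le_of_abs_le hderiv hLip hC.le heven hanti
    (hpos ξ₁).1.le h12 hgap
  have hsecond := abs_sq_sub_sq_mul_le (hpos ξ₁).1.le (hm12.trans hm23) ξ₃
  have hm2 := (hpos ξ₂).1
  rw [IMethod.symbol_eq_of_even heven hsum, abs_neg]
  calc _ ≤ |(m ξ₂ ^ 2 - m ξ₁ ^ 2) * ξ₂| + |(m ξ₃ ^ 2 - m ξ₁ ^ 2) * ξ₃| := abs_add_le _ _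
    _ ≤ 2 * C ^ 2 * |ξ₃| * m ξ₃ ^ 2 + m ξ₃ ^ 2 * |ξ₃| := by
        gcongr
        exact hfirst.trans (by gcongr)
    _ = (2 * C ^ 2 + 1) * |ξ₃| * m ξ₃ ^ 2 := by ring
end
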